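/- arXiv:1109.1174 — 2 statements merged into one kernel-verified Lean document; each statement's English description precedes it below -/
import Mathlib

section
/- A generic compact subset of ℝ is visible: the set of K ∈ 𝒞(ℝ) for which there exists a translation-invariant Borel measure μ on ℝ with 0 < μ(K) < ∞ is comeager in 𝒞(ℝ). -/
open Set MeasureTheory TopologicalSpace

/-- A (Borel) measure on `ℝ` is translation invariant if `μ(A + t) = μ(A)` for every
Borel set `A` and every `t : ℝ`. -/
def TransInvariant (μ : Measure ℝ) : Prop :=
  ∀ (t : ℝ) (A : Set ℝ), MeasurableSet A → μ ((fun x => x + t) '' A) = μ A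

/-!
A generic compact set `K ⊆ ℝ` is perfect and Sidon (`a + b = c + d` in `K` forces
`{a, b} = {c, d}`): the sets with a `ρ`-isolated point are nowhere dense, since every `K` is
close to its thickening `K + [-r, r]` and, for small `r`, no compact set near that thickening
has a `ρ`-isolated point; the sets with an additive quadruple whose points are `ρ`-apart are
closed and miss the dense family of finite Sidon sets.

A perfect set carries an atomless probability measure `ν` (push Haar measure on the Cantor
group forward along a Cantor embedding). The sum `μ = ∑ₜ ν(· - t)` over all `t ∈ ℝ` is
translation invariant, and for Sidon `K` only the term `t = 0` charges `K`, because
`K ∩ (K + t)` has at most one point when `t ≠ 0`. Hence `μ K = ν K = 1`.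
-/

open Filter Topology Function Metric
open scoped Pointwise

def IsSidon {G : Type*} [Add G] (S : Set G) : Prop :=
  ∀ a ∈ S, ∀ b ∈ S, ∀ c ∈ S, ∀ d ∈ S, a + b = c + d → a = c ∨ a = d

theorem IsSidon.inter_preimage_add_right_subsingleton {G : Type*} [AddCommGroup G] {S : Set G}
    (hS : IsSidon S) {t : G} (ht : t ≠ 0) : (S ∩ (· + t) ⁻¹' S).Subsingleton := by
  rintro x ⟨hx, hxt⟩ y ⟨hy, hyt⟩
  rcases hS x hx (y + t) hyt y hy (x + t) hxt (by abel) with h | h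
  · exact h
  · exact (ht (by simpa using h)).elim

theorem IsSidon.exists_insert {S : Set ℝ} (hS : IsSidon S) (hfin : S.Finite) {U : Set ℝ}
    (hU : IsOpen U) (hne : U.Nonempty) : ∃ x ∈ U, IsSidon (insert x S) := by
  obtain ⟨u, hu⟩ := hne
  -- a new relation `a + b = c + d` involving `x` would put `x` in one of these two sets
  have hbad : ((fun p : ℝ × ℝ × ℝ => p.1 + p.2.1 - p.2.2) '' (S ×ˢ S ×ˢ S) ∪
      (fun p : ℝ × ℝ => (p.1 + p.2) / 2) '' (S ×ˢ S)).Finite :=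
    ((hfin.prod (hfin.prod hfin)).image _).union ((hfin.prod hfin).image _)
  obtain ⟨x, hxU, hx⟩ := ((infinite_of_mem_nhds u (hU.mem_nhds hu)).sdiff hbad).nonempty
  have h₁ : ∀ b ∈ S, ∀ c ∈ S, ∀ d ∈ S, x ≠ c + d - b := fun b hb c hc d hd he =>
    hx (Or.inl ⟨(c, d, b), ⟨hc, hd, hb⟩, he.symm⟩)
  have h₂ : ∀ c ∈ S, ∀ d ∈ S, x ≠ (c + d) / 2 := fun c hc d hd he =>
    hx (Or.inr ⟨(c, d), ⟨hc, hd⟩, he.symm⟩)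
  refine ⟨x, hxU, fun a ha b hb c hc d hd he => ?_⟩
  simp only [mem_insert_iff] at ha hb hc hd
  grind [IsSidon]

theorem exists_finite_isSidon_inter_nonempty {u : Set (Set ℝ)} (hu : u.Finite)
    (hopen : ∀ U ∈ u, IsOpen U) (hne : ∀ U ∈ u, U.Nonempty) :
    ∃ S : Set ℝ, S.Finite ∧ IsSidon S ∧ S ⊆ ⋃₀ u ∧ ∀ U ∈ u, (S ∩ U).Nonempty := by
  induction u, hu using Set.Finite.induction_on with
  | empty => exact ⟨∅, finite_empty, by simp [IsSidon], empty_subset _, by simp⟩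
  | @insert U u _ _ ih =>
    obtain ⟨S, hfin, hS, hSu, hSU⟩ := ih (fun V hV => hopen V (mem_insert_of_mem _ hV))
      (fun V hV => hne V (mem_insert_of_mem _ hV))
    obtain ⟨x, hxU, hxS⟩ :=
      hS.exists_insert hfin (hopen U (mem_insert _ _)) (hne U (mem_insert _ _))
    refine ⟨insert x S, hfin.insert x, hxS, ?_, ?_⟩
    · rw [sUnion_insert]
      exact insert_subset (Or.inl hxU) (hSu.trans subset_union_right)
    · rintro V (rfl | hV)
      · exact ⟨x, mem_insert _ _, hxU⟩
      · exact (hSU V hV).mono (inter_subset_inter_left _ (subset_insert _ _))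

theorem perfectSpace_pi {ι : Type*} [Infinite ι] {X : ι → Type*} [∀ i, TopologicalSpace (X i)]
    [∀ i, Nontrivial (X i)] : PerfectSpace (∀ i, X i) := by
  classical
  refine perfectSpace_iff_forall_not_isolated.2 fun x => ?_
  rw [← mem_closure_iff_nhdsWithin_neBot]
  choose y hy using fun i => exists_ne (x i)
  have hlim : Tendsto (fun i => update x i (y i)) cofinite (𝓝 x) := by
    refine tendsto_pi_nhds.2 fun j => tendsto_const_nhds.congr' ?_
    filter_upwards [eventually_cofinite_ne j] with i hij
    rw [update_of_ne hij.symm]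
  exact mem_closure_of_tendsto hlim
    (Eventually.of_forall fun i h => hy i (by simpa using congrFun h i))

theorem Perfect.exists_isProbabilityMeasure_nullSingletonClass {α : Type*} [MetricSpace α]
    [CompleteSpace α] [MeasurableSpace α] [BorelSpace α] {K : Set α} (hK : Perfect K)
    (hne : K.Nonempty) :
    ∃ ν : Measure α, IsProbabilityMeasure ν ∧ NullSingletonClass ν ∧ ν Kᶜ = 0 := by
  obtain ⟨f, hfK, hfc, hfi⟩ := hK.exists_nat_bool_injection hne
  let g : (ℕ → ZMod 2) → α := f ∘ fun x n => finTwoEquiv (x n)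
  have hgc : Continuous g :=
    hfc.comp <| continuous_pi fun n => continuous_of_discreteTopology.comp (continuous_apply n)
  have hgi : Injective g :=
    hfi.comp fun x y h => funext fun n => finTwoEquiv.injective (congrFun h n)
  have : PerfectSpace (ℕ → ZMod 2) := perfectSpace_pi
  let μ : Measure (ℕ → ZMod 2) := Measure.addHaarMeasure ⊤
  have : IsProbabilityMeasure μ := ⟨Measure.addHaarMeasure_self (K₀ := ⊤)⟩
  refine ⟨μ.map g, Measure.isProbabilityMeasure_map hgc.aemeasurable, ⟨fun x => ?_⟩, ?_⟩
  · rw [Measure.map_apply hgc.measurable (measurableSet_singleton x)]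
    exact (subsingleton_singleton.preimage hgi).measure_zero μ
  · rw [Measure.map_apply hgc.measurable hK.closed.measurableSet.compl]
    have : g ⁻¹' Kᶜ = ∅ := eq_empty_of_forall_notMem fun y hy => hy (hfK (mem_range_self _))
    rw [this, measure_empty]

section SumOfTranslates

variable {G : Type*} [AddGroup G] [MeasurableSpace G] [MeasurableAdd G]

theorem isAddRightInvariant_sum_map_add_right (ν : Measure G) :
    (Measure.sum fun t : G => ν.map (· + t)).IsAddRightInvariant := by
  refine ⟨fun s => ?_⟩
  rw [Measure.map_sum (measurable_add_const s).aemeasurable]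
  have h : ∀ t : G, (ν.map (· + t)).map (· + s) = ν.map (· + (t + s)) := fun t => by
    rw [Measure.map_map (measurable_add_const s) (measurable_add_const t)]
    congr 1
    ext x
    simp [add_assoc]
  simp_rw [h]
  exact Measure.sum_comp_equiv (Equiv.addRight s) (fun t => ν.map (· + t))

theorem sum_map_add_right_apply (ν : Measure G) {A : Set G} (hA : MeasurableSet A) :
    (Measure.sum fun t : G => ν.map (· + t)) A = ∑' t, ν ((· + t) ⁻¹' A) := by
  simp_rw [Measure.sum_apply _ hA, Measure.map_apply (measurable_add_const _) hA]

end SumOfTranslates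

theorem sum_map_add_right_apply_of_isSidon {G : Type*} [AddCommGroup G] [MeasurableSpace G]
    [MeasurableAdd G] {ν : Measure G} [NullSingletonClass ν] {K : Set G}
    (hK : MeasurableSet K) (hνK : ν Kᶜ = 0) (hS : IsSidon K) :
    (Measure.sum fun t : G => ν.map (· + t)) K = ν K := by
  rw [sum_map_add_right_apply ν hK, tsum_eq_single 0 fun t ht => ?_]
  · simp
  exact measure_mono_null (fun x hx => (em (x ∈ K)).imp (⟨·, hx⟩) id)
    (measure_union_null ((hS.inter_preimage_add_right_subsingleton ht).measure_zero ν) hνK)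

theorem transInvariant_of_isAddRightInvariant (μ : Measure ℝ) [μ.IsAddRightInvariant] :
    TransInvariant μ := fun t A _ => by
  rw [image_add_right, measure_preimage_add_right]

theorem Perfect.exists_transInvariant_of_isSidon {K : Set ℝ} (hK : Perfect K)
    (hne : K.Nonempty) (hS : IsSidon K) :
    ∃ μ : Measure ℝ, TransInvariant μ ∧ 0 < μ K ∧ μ K < ⊤ := by
  obtain ⟨ν, _, _, hνK⟩ := hK.exists_isProbabilityMeasure_nullSingletonClass hne
  have hKm : MeasurableSet K := hK.closed.measurableSet
  have hμK := sum_map_add_right_apply_of_isSidon hKm hνK hS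
  have hνK₁ : ν K = 1 := (prob_compl_eq_zero_iff hKm).1 hνK
  have := isAddRightInvariant_sum_map_add_right ν
  exact ⟨_, transInvariant_of_isAddRightInvariant (Measure.sum fun t : ℝ => ν.map (· + t)),
    by simp [hμK, hνK₁], by simp [hμK, hνK₁]⟩

theorem isNowhereDense_of_forall_exists_ball {X : Type*} [PseudoMetricSpace X] {s : Set X}
    (h : ∀ x, ∀ ε > 0, ∃ y, dist y x < ε ∧ ∃ δ > 0, Disjoint (ball y δ) s) :
    IsNowhereDense s := by
  rw [IsNowhereDense, interior_eq_empty_iff_dense_compl, Metric.dense_iff]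
  intro x ε hε
  obtain ⟨y, hyx, δ, hδ, hdisj⟩ := h x ε hε
  refine ⟨y, mem_ball.2 hyx, fun hy => ?_⟩
  obtain ⟨z, hz, hyz⟩ := Metric.mem_closure_iff.1 hy δ hδ
  exact hdisj.notMem_of_mem_left (mem_ball'.2 hyz) hz

namespace TopologicalSpace.NonemptyCompacts

theorem exists_dist_lt_of_dist_lt {X : Type*} [MetricSpace X] {K L : NonemptyCompacts X}
    {r : ℝ} (h : dist K L < r) {x : X} (hx : x ∈ (K : Set X)) :
    ∃ y ∈ (L : Set X), dist x y < r :=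
  exists_dist_lt_of_hausdorffDist_lt hx h (edist_ne_top K L)

theorem hausdorffDist_add_Icc_le (K : NonemptyCompacts ℝ) {r : ℝ} (hr : 0 ≤ r) :
    hausdorffDist ((K : Set ℝ) + Icc (-r) r) K ≤ r := by
  refine hausdorffDist_le_of_mem_dist hr ?_ fun x hx =>
    ⟨x, ⟨x, hx, 0, by simp [hr], add_zero x⟩, by simp [hr]⟩
  rintro _ ⟨z, hz, w, hw, rfl⟩
  exact ⟨z, hz, by simpa [Real.dist_eq, abs_le] using hw⟩

end TopologicalSpace.NonemptyCompacts

def setOfIsolatedPoint (ρ : ℝ) : Set (NonemptyCompacts ℝ) :=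
  {K | ∃ x ∈ (K : Set ℝ), ∀ y ∈ (K : Set ℝ), |y - x| < ρ → y = x}

/-- Near `x ∈ L` lies a whole interval `[z - r, z + r] ⊆ M`, whose two ends are shadowed by two
distinct points of `L` within `ρ` of `x`. -/
theorem notMem_setOfIsolatedPoint {K : Set ℝ} {M L : NonemptyCompacts ℝ} {r δ ρ : ℝ}
    (hM : (M : Set ℝ) = K + Icc (-r) r) (hδr : δ < r) (hρ : 2 * r + 2 * δ ≤ ρ)
    (hL : dist L M < δ) : L ∉ setOfIsolatedPoint ρ := by
  rintro ⟨x, hx, hiso⟩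
  obtain ⟨y, hyM, hxy⟩ := NonemptyCompacts.exists_dist_lt_of_dist_lt hL hx
  rw [hM] at hyM
  obtain ⟨z, hz, w, ⟨hw₁, hw₂⟩, rfl⟩ := hyM
  have hM' : ∀ s ∈ Icc (-r) r, z + s ∈ (M : Set ℝ) := fun s hs => hM ▸ add_mem_add hz hs
  obtain ⟨x₁, hx₁, h₁⟩ := NonemptyCompacts.exists_dist_lt_of_dist_lt (dist_comm L M ▸ hL)
    (hM' (-r) ⟨le_rfl, by linarith⟩)
  obtain ⟨x₂, hx₂, h₂⟩ := NonemptyCompacts.exists_dist_lt_of_dist_lt (dist_comm L M ▸ hL)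
    (hM' r ⟨by linarith, le_rfl⟩)
  rw [Real.dist_eq, abs_lt] at hxy h₁ h₂
  have e₁ : x₁ = x := hiso x₁ hx₁ (abs_lt.2 ⟨by linarith, by linarith⟩)
  have e₂ : x₂ = x := hiso x₂ hx₂ (abs_lt.2 ⟨by linarith, by linarith⟩)
  linarith

theorem isNowhereDense_setOfIsolatedPoint {ρ : ℝ} (hρ : 0 < ρ) :
    IsNowhereDense (setOfIsolatedPoint ρ) := by
  refine isNowhereDense_of_forall_exists_ball fun K ε hε => ?_
  set r := min (ε / 2) (ρ / 4)
  have hr : 0 < r := by positivity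
  have hrε : r ≤ ε / 2 := min_le_left _ _
  have hrρ : r ≤ ρ / 4 := min_le_right _ _
  let M : NonemptyCompacts ℝ := ⟨⟨K + Icc (-r) r, K.isCompact.add isCompact_Icc⟩,
    K.nonempty.add (nonempty_Icc.2 (by linarith))⟩
  refine ⟨M, (K.hausdorffDist_add_Icc_le hr.le).trans_lt (by linarith), r / 2,
    by positivity, disjoint_left.2 fun L hL => ?_⟩
  exact notMem_setOfIsolatedPoint rfl (by linarith) (by linarith) (mem_ball.1 hL)

theorem eventually_residual_perfect :
    ∀ᶠ K : NonemptyCompacts ℝ in residual _, Perfect (K : Set ℝ) := by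
  have h : ∀ n : ℕ, (setOfIsolatedPoint (1 / (n + 1)))ᶜ ∈ residual (NonemptyCompacts ℝ) :=
    fun n => (isNowhereDense_setOfIsolatedPoint (by positivity)).isMeagre
  filter_upwards [countable_iInter_mem.2 h] with K hK
  refine ⟨K.isCompact.isClosed, preperfect_iff_nhds.2 fun x hx U hU => ?_⟩
  obtain ⟨ε, hε, hball⟩ := Metric.mem_nhds_iff.1 hU
  obtain ⟨n, hn⟩ := exists_nat_one_div_lt hε
  by_contra! hiso
  refine mem_iInter.1 hK n ⟨x, hx, fun y hy hyx => hiso y ⟨hball ?_, hy⟩⟩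
  rw [mem_ball, Real.dist_eq]
  linarith

theorem dense_setOf_isSidon : Dense {K : NonemptyCompacts ℝ | IsSidon (K : Set ℝ)} := by
  refine NonemptyCompacts.isTopologicalBasis.dense_iff.2 ?_
  rintro _ ⟨u, ⟨hu, ⟨U₀, hU₀⟩, hopen⟩, rfl⟩ ⟨K, -, hK⟩
  obtain ⟨S, hfin, hS, hSu, hSU⟩ :=
    exists_finite_isSidon_inter_nonempty hu hopen fun U hU => (hK U hU).mono inter_subset_right
  exact ⟨⟨⟨S, hfin.isCompact⟩, (hSU U₀ hU₀).mono inter_subset_left⟩, ⟨hSu, hSU⟩, hS⟩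

def setOfFarAdditiveQuadruple (ρ : ℝ) : Set (NonemptyCompacts ℝ) :=
  {K | ∃ a ∈ (K : Set ℝ), ∃ b ∈ (K : Set ℝ), ∃ c ∈ (K : Set ℝ), ∃ d ∈ (K : Set ℝ),
    a + b = c + d ∧ ρ ≤ |a - c| ∧ ρ ≤ |a - d|}

theorem isClosed_setOfFarAdditiveQuadruple (ρ : ℝ) :
    IsClosed (setOfFarAdditiveQuadruple ρ) := by
  let Q : Set (ℝ × ℝ × ℝ × ℝ) :=
    {p | p.1 + p.2.1 = p.2.2.1 + p.2.2.2 ∧ ρ ≤ |p.1 - p.2.2.1| ∧ ρ ≤ |p.1 - p.2.2.2|}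
  have hQ : IsClosed Q := by
    simp only [Q, ofPred_and]
    refine (isClosed_eq ?_ ?_).inter ((isClosed_le ?_ ?_).inter (isClosed_le ?_ ?_)) <;> fun_prop
  have hcont : Continuous fun K : NonemptyCompacts ℝ => K ×ˢ K ×ˢ K ×ˢ K := by fun_prop
  convert (NonemptyCompacts.isClosed_inter_nonempty_of_isClosed hQ).preimage hcont
  ext K
  simp only [setOfFarAdditiveQuadruple, Q, Set.Nonempty, mem_ofPred_eq, mem_preimage,
    mem_inter_iff, NonemptyCompacts.coe_prod, mem_prod, Prod.exists, and_assoc]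
  exact ⟨fun ⟨a, ha, b, hb, c, hc, d, hd, h⟩ => ⟨a, b, c, d, ha, hb, hc, hd, h⟩,
    fun ⟨a, b, c, d, ha, hb, hc, hd, h⟩ => ⟨a, ha, b, hb, c, hc, d, hd, h⟩⟩

theorem IsSidon.notMem_setOfFarAdditiveQuadruple {K : NonemptyCompacts ℝ}
    (hK : IsSidon (K : Set ℝ)) {ρ : ℝ} (hρ : 0 < ρ) : K ∉ setOfFarAdditiveQuadruple ρ := by
  rintro ⟨a, ha, b, hb, c, hc, d, hd, he, hac, had⟩
  rcases hK a ha b hb c hc d hd he with rfl | rfl <;> simp at hac had <;> linarith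

theorem eventually_residual_isSidon :
    ∀ᶠ K : NonemptyCompacts ℝ in residual _, IsSidon (K : Set ℝ) := by
  have h : ∀ n : ℕ,
      (setOfFarAdditiveQuadruple (1 / (n + 1)))ᶜ ∈ residual (NonemptyCompacts ℝ) := fun n =>
    residual_of_dense_open (isClosed_setOfFarAdditiveQuadruple _).isOpen_compl
      (dense_setOf_isSidon.mono fun K hK => hK.notMem_setOfFarAdditiveQuadruple (by positivity))
  filter_upwards [countable_iInter_mem.2 h] with K hK
  intro a ha b hb c hc d hd he
  by_contra! hne
  obtain ⟨n, hn⟩ := exists_nat_one_div_lt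
    (lt_min (abs_pos.2 (sub_ne_zero.2 hne.1)) (abs_pos.2 (sub_ne_zero.2 hne.2)))
  exact mem_iInter.1 hK n ⟨a, ha, b, hb, c, hc, d, hd, he,
    hn.le.trans (min_le_left _ _), hn.le.trans (min_le_right _ _)⟩

/-- A generic compact subset of `ℝ` is visible: the set of
`K ∈ 𝒞(ℝ)` admitting a translation-invariant Borel measure `μ` with `0 < μ(K) < ∞`
is comeager in `𝒞(ℝ)`. -/
theorem stmt_11 :
    {K : NonemptyCompacts ℝ |
        ∃ μ : Measure ℝ, TransInvariant μ ∧ 0 < μ (K : Set ℝ) ∧ μ (K : Set ℝ) < ⊤} ∈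
      residual (NonemptyCompacts ℝ) := by
  filter_upwards [eventually_residual_perfect, eventually_residual_isSidon] with K hK hS
  exact hK.exists_transInvariant_of_isSidon K.nonempty hS
end

section
/- Let G be an abelian Polish group with a compatible translation-invariant complete metric, (t_k)_{k≥1} a good sequence in G, and (A_k)_{k≥0} a decreasing sequence of subsets of ℕ with A₀ = ℕ and A_k \ A_{k+1} infinite for all k ≥ 0. Fix k, l ≥ 1 and let U = {∑_{i=0}^{l−1} α_i·t_{k+i} : α_i ∈ {0,1}, and α_i = 0 whenever k+i ∈ A_k}. Then C_k is the union of the finitely many translates C⁰_{k,l} + u for u ∈ U, and these translates are pairwise disjoint. -/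
/-!
Clearing the window `[k, k + l)` of `σ ∈ B_k` lands in `B⁰_{k,l}`, and writing the window back
adds the finite sum `∑ σ(k+i)·t_{k+i}` to `p`, because the series defining `p` converge
absolutely (an invariant metric is the metric of the norm `x ↦ d(0, x)`). The admissible windows
give exactly `U`, so `C_k = ⋃ (C⁰_{k,l} + u)`. If two translates met, the two reassembled
sequences would have the same image under the injective `p`, hence the same window.
-/

open Set TopologicalSpace

/-- `p(σ) = ∑ₖ σ(k)·t k` for `σ ∈ {0,1}^ℕ`. -/
noncomputable def pSum {G : Type*} [AddCommGroup G] [TopologicalSpace G]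
    (t : ℕ → G) (σ : ℕ → Bool) : G :=
  ∑' k, if σ k then t k else 0

/-- `B_k = {σ ∈ {0,1}^ℕ : σ(i) = 0 if i < k or i ∈ A_k}`. -/
def BSet (A : ℕ → Set ℕ) (k : ℕ) : Set (ℕ → Bool) :=
  {σ | ∀ i : ℕ, (i < k ∨ i ∈ A k) → σ i = false}

/-- `B⁰_{k,l} = {σ ∈ B_k : σ(k) = ⋯ = σ(k+l-1) = 0}`. -/
def BSet0 (A : ℕ → Set ℕ) (k l : ℕ) : Set (ℕ → Bool) :=
  {σ | σ ∈ BSet A k ∧ ∀ i : ℕ, k ≤ i → i < k + l → σ i = false}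

/-- `D_{k,l} = {τ ∈ {0,1}^ℕ : τ(s) = 0 if s < k + l or s ∉ A_k \ A_{k+l}}`. -/
def DSet (A : ℕ → Set ℕ) (k l : ℕ) : Set (ℕ → Bool) :=
  {τ | ∀ s : ℕ, (s < k + l ∨ s ∉ A k \ A (k + l)) → τ s = false}

theorem summable_of_summable_dist_zero {ι G : Type*} [AddCommGroup G] [MetricSpace G]
    [CompleteSpace G] (hinv : ∀ a b u : G, dist (a + u) (b + u) = dist a b) {f : ι → G}
    (hf : Summable fun i => dist 0 (f i)) : Summable f := by
  let : Norm G := ⟨fun x => dist 0 x⟩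
  let : NormedAddCommGroup G := NormedAddCommGroup.ofAddDist' (fun _ => rfl)
    (fun x y z => by rw [add_comm z x, add_comm z y, hinv])
  exact Summable.of_norm hf

section Overwrite

variable {k l : ℕ}

def overwrite (k : ℕ) (σ : ℕ → Bool) (α : Fin l → Bool) : ℕ → Bool :=
  fun i => if h : k ≤ i ∧ i < k + l then α ⟨i - k, by omega⟩ else σ i

theorem overwrite_apply_add (σ : ℕ → Bool) (α : Fin l → Bool) (i : Fin l) :
    overwrite k σ α (k + i) = α i := by
  simp [overwrite, i.isLt]

theorem overwrite_apply_of_not_mem {σ : ℕ → Bool} (α : Fin l → Bool) {i : ℕ}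
    (hi : ¬(k ≤ i ∧ i < k + l)) : overwrite k σ α i = σ i := by
  simp [overwrite, hi]

theorem overwrite_overwrite (σ : ℕ → Bool) (α β : Fin l → Bool) :
    overwrite k (overwrite k σ β) α = overwrite k σ α := by
  funext i
  by_cases hi : k ≤ i ∧ i < k + l <;> simp [overwrite, hi]

theorem overwrite_self (σ : ℕ → Bool) : overwrite k σ (fun i : Fin l => σ (k + i)) = σ := by
  funext i
  by_cases hi : k ≤ i ∧ i < k + l
  · simp [overwrite, hi, Nat.add_sub_cancel' hi.1]
  · simp [overwrite, hi]

theorem overwrite_mem_BSet {A : ℕ → Set ℕ} {σ : ℕ → Bool} (hσ : σ ∈ BSet A k)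
    {α : Fin l → Bool} (hα : ∀ i : Fin l, k + (i : ℕ) ∈ A k → α i = false) :
    overwrite k σ α ∈ BSet A k := by
  intro i hi
  by_cases hw : k ≤ i ∧ i < k + l
  · obtain ⟨j, rfl⟩ := Nat.exists_eq_add_of_le hw.1
    rw [overwrite_apply_add σ α ⟨j, by omega⟩]
    exact hα _ (hi.resolve_left (by omega))
  · rw [overwrite_apply_of_not_mem α hw]
    exact hσ i hi

theorem overwrite_false_mem_BSet0 {A : ℕ → Set ℕ} {σ : ℕ → Bool} (hσ : σ ∈ BSet A k) :
    overwrite k σ (fun _ : Fin l => false) ∈ BSet0 A k l :=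
  ⟨overwrite_mem_BSet hσ fun _ _ => rfl, fun i h₁ h₂ => by simp [overwrite, h₁, h₂]⟩

end Overwrite

section WindowSum

variable {G : Type*} [AddCommGroup G] [MetricSpace G] [CompleteSpace G] [IsTopologicalAddGroup G]

theorem pSum_overwrite (hinv : ∀ a b u : G, dist (a + u) (b + u) = dist a b) {t : ℕ → G}
    (ht : Summable fun i => dist 0 (t i)) {k l : ℕ} {σ : ℕ → Bool}
    (hσ : ∀ i, k ≤ i → i < k + l → σ i = false) (α : Fin l → Bool) :
    pSum t (overwrite k σ α) = pSum t σ + ∑ i : Fin l, if α i then t (k + i) else 0 := by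
  set w := Finset.Ico k (k + l)
  set f : ℕ → G := fun i => if overwrite k σ α i then t i else 0
  have hsplit : ∀ i, f i = (if σ i then t i else 0) + if i ∈ w then f i else 0 := by
    intro i
    by_cases hi : k ≤ i ∧ i < k + l
    · simp [hσ i hi.1 hi.2, w, hi]
    · simp [f, w, hi, overwrite_apply_of_not_mem α hi]
  have hσsum : Summable fun i => if σ i then t i else 0 :=
    summable_of_summable_dist_zero hinv <| ht.of_nonneg_of_le (fun _ => dist_nonneg)
      fun i => by split_ifs <;> simp
  have hwsum : ∑' i, (if i ∈ w then f i else 0) = ∑ i : Fin l, if α i then t (k + i) else 0 := by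
    rw [tsum_eq_sum (s := w) fun i hi => if_neg hi, Finset.sum_ite_mem, Finset.inter_self,
      Finset.sum_Ico_eq_sum_range, Nat.add_sub_cancel_left, ← Fin.sum_univ_eq_sum_range]
    simp [f, overwrite_apply_add]
  rw [pSum, tsum_congr hsplit, hσsum.tsum_add (summable_of_ne_finset_zero fun i hi => if_neg hi),
    hwsum, pSum]

end WindowSum

theorem stmt_19_general {G : Type*} [AddCommGroup G] [MetricSpace G] [CompleteSpace G]
    [IsTopologicalAddGroup G]
    (hmetinv : ∀ a b u : G, dist (a + u) (b + u) = dist a b)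
    (t : ℕ → G)
    (hsum : Summable fun k => dist (0 : G) (t k))
    (hgood : Function.Injective (pSum t))
    (A : ℕ → Set ℕ)
    (k l : ℕ)
    (U : Set G)
    (hU : U = {u : G | ∃ α : Fin l → Bool, (∀ i : Fin l, k + (i : ℕ) ∈ A k → α i = false) ∧
        u = ∑ i : Fin l, if α i then t (k + (i : ℕ)) else 0}) :
    U.Finite ∧
    pSum t '' BSet A k = (⋃ u ∈ U, (fun x => x + u) '' (pSum t '' BSet0 A k l)) ∧
    (∀ u₁ ∈ U, ∀ u₂ ∈ U, u₁ ≠ u₂ →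
      Disjoint ((fun x => x + u₁) '' (pSum t '' BSet0 A k l))
        ((fun x => x + u₂) '' (pSum t '' BSet0 A k l))) := by
  subst hU
  refine ⟨(Set.finite_range fun α : Fin l → Bool => ∑ i : Fin l, if α i then t (k + i) else 0).subset
    fun _ ⟨α, _, hu⟩ => ⟨α, hu.symm⟩, ?_, ?_⟩
  · ext x
    simp only [Set.mem_image, Set.mem_iUnion, Set.mem_ofPred_eq, exists_prop]
    constructor
    · rintro ⟨σ, hσ, rfl⟩
      set σ₀ := overwrite k σ fun _ : Fin l => false
      have hσ₀ : σ₀ ∈ BSet0 A k l := overwrite_false_mem_BSet0 hσ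
      refine ⟨_, ⟨fun i => σ (k + i), fun i hi => hσ _ (Or.inr hi), rfl⟩, _, ⟨σ₀, hσ₀, rfl⟩, ?_⟩
      rw [← pSum_overwrite hmetinv hsum hσ₀.2, overwrite_overwrite, overwrite_self]
    · rintro ⟨_, ⟨α, hα, rfl⟩, _, ⟨σ, hσ, rfl⟩, rfl⟩
      exact ⟨_, overwrite_mem_BSet hσ.1 hα, pSum_overwrite hmetinv hsum hσ.2 α⟩
  · rintro _ ⟨α₁, -, rfl⟩ _ ⟨α₂, -, rfl⟩ hne
    refine Set.disjoint_left.2 ?_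
    rintro x ⟨_, ⟨σ₁, hσ₁, rfl⟩, hx₁⟩ ⟨_, ⟨σ₂, hσ₂, rfl⟩, hx₂⟩
    have heq : overwrite k σ₁ α₁ = overwrite k σ₂ α₂ := hgood <| by
      rw [pSum_overwrite hmetinv hsum hσ₁.2, pSum_overwrite hmetinv hsum hσ₂.2]
      exact hx₁.trans hx₂.symm
    refine hne (congrArg _ (funext fun i => ?_))
    rw [← overwrite_apply_add σ₁ α₁ i, heq, overwrite_apply_add]

/-- With `(t k)` a good sequence in an abelian Polish group `G` (with
compatible translation-invariant complete metric) and `(A k)` a decreasing sequence of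
subsets of `ℕ` with `A 0 = ℕ` and `A k \ A (k+1)` infinite, for fixed `k, l ≥ 1` and
`U = {∑_{i<l} αᵢ·t(k+i) : αᵢ ∈ {0,1}, αᵢ = 0 whenever k+i ∈ A_k}`, the set `C_k` is the
union of the finitely many translates `C⁰_{k,l} + u`, `u ∈ U`, and these translates are
pairwise disjoint. -/
theorem stmt_19 {G : Type*} [AddCommGroup G] [MetricSpace G] [CompleteSpace G]
    [SeparableSpace G] [IsTopologicalAddGroup G]
    (hmetinv : ∀ a b u : G, dist (a + u) (b + u) = dist a b)
    (t : ℕ → G) (htinj : Function.Injective t)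
    (hsum : Summable fun k => dist (0 : G) (t k))
    (hgood : Function.Injective (pSum t))
    (A : ℕ → Set ℕ) (hA0 : A 0 = Set.univ)
    (hAdec : ∀ k, A (k + 1) ⊆ A k)
    (hAinf : ∀ k, (A k \ A (k + 1)).Infinite)
    (k l : ℕ) (hk : 1 ≤ k) (hl : 1 ≤ l)
    (U : Set G)
    (hU : U = {u : G | ∃ α : Fin l → Bool, (∀ i : Fin l, k + (i : ℕ) ∈ A k → α i = false) ∧
        u = ∑ i : Fin l, if α i then t (k + (i : ℕ)) else 0}) :
    U.Finite ∧
    pSum t '' BSet A k = (⋃ u ∈ U, (fun x => x + u) '' (pSum t '' BSet0 A k l)) ∧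
    (∀ u₁ ∈ U, ∀ u₂ ∈ U, u₁ ≠ u₂ →
      Disjoint ((fun x => x + u₁) '' (pSum t '' BSet0 A k l))
        ((fun x => x + u₂) '' (pSum t '' BSet0 A k l))) :=
  stmt_19_general hmetinv t hsum hgood A k l U hU
end
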